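/- Let k > 0, γ > 0, t ≥ 0, set τ := exp(-k·t)·sinh(k·t)/k, and let μ := gaussianReal 0 (γ²·τ). Then for every real p, the variance of the function x ↦ 1 - 2·p·(1-p)·(1 - cos x) with respect to μ equals 2·p²·(1-p)²·(1 - exp(-γ²·τ))². -/

import Mathlib

open ProbabilityTheory MeasureTheory

open scoped NNReal

/-! The fidelity is affine in `cos x`, so its variance is `(2p(1-p))² Var[cos]`. For a centred
Gaussian of variance `v`, the characteristic function gives `E[cos (s x)] = exp (-v s² / 2)`, so
with `cos² x = (1 + cos 2x) / 2` we get
`Var[cos] = (1 + e^{-2v}) / 2 - e^{-v} = (1 - e^{-v})² / 2`. -/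

lemma memLp_cos_comp {α : Type*} [MeasurableSpace α] (μ : Measure α) [IsFiniteMeasure μ]
    {f : α → ℝ} (hf : Measurable f) (q : ENNReal) :
    MemLp (fun x => Real.cos (f x)) q μ :=
  MemLp.of_bound (by fun_prop) 1
    (ae_of_all _ fun x => by simpa using Real.abs_cos_le_one (f x))

lemma integral_cos_mul_gaussianReal (m : ℝ) (v : ℝ≥0) (s : ℝ) :
    ∫ x, Real.cos (s * x) ∂gaussianReal m v =
      Real.cos (s * m) * Real.exp (-(v * s ^ 2) / 2) := by
  have hint : Integrable (fun x : ℝ => Complex.exp (s * x * Complex.I)) (gaussianReal m v) :=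
    Integrable.of_bound (by fun_prop) 1
      (ae_of_all _ fun x => by simpa using (Complex.norm_exp_ofReal_mul_I (s * x)).le)
  have hexp : (s : ℂ) * m * Complex.I - v * s ^ 2 / 2 =
      ((-(v * s ^ 2) / 2 : ℝ) : ℂ) + ((s * m : ℝ) : ℂ) * Complex.I := by
    push_cast; ring
  calc ∫ x, Real.cos (s * x) ∂gaussianReal m v
      = ∫ x, RCLike.re (Complex.exp (s * x * Complex.I)) ∂gaussianReal m v := by
        simp_rw [RCLike.re_to_complex, ← Complex.ofReal_mul, Complex.exp_ofReal_mul_I_re]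
    _ = (charFun (gaussianReal m v) s).re := by rw [integral_re hint, charFun_apply_real]; rfl
    _ = _ := by
      rw [charFun_gaussianReal, hexp, Complex.exp_add, ← Complex.ofReal_exp,
        Complex.re_ofReal_mul, Complex.exp_ofReal_mul_I_re, mul_comm]

lemma variance_cos_gaussianReal (v : ℝ≥0) :
    Var[Real.cos; gaussianReal 0 v] = (1 - Real.exp (-v)) ^ 2 / 2 := by
  have hcos (s : ℝ) := integral_cos_mul_gaussianReal 0 v s
  simp only [mul_zero, Real.cos_zero, one_mul] at hcos
  have hcos_sq : ∫ x, Real.cos x ^ 2 ∂gaussianReal 0 v = (1 + Real.exp (-v) ^ 2) / 2 := by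
    have hint := (memLp_cos_comp (gaussianReal 0 v) (measurable_const_mul 2) 1).integrable le_rfl
    simp_rw [Real.cos_sq]
    rw [integral_add (integrable_const _) (hint.div_const 2), integral_div, integral_div, hcos,
      integral_const, probReal_univ, one_smul, ← Real.exp_nat_mul]
    ring_nf
  have hL : MemLp Real.cos 2 (gaussianReal 0 v) := memLp_cos_comp _ measurable_id 2
  have hcos_one : ∫ x, Real.cos x ∂gaussianReal 0 v = Real.exp (-v / 2) := by
    simpa using hcos 1
  rw [variance_eq_sub hL, Pi.pow_def, hcos_sq, hcos_one, ← Real.exp_nat_mul (-v / 2)]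
  ring_nf

lemma variance_one_sub_mul_one_sub {Ω : Type*} [MeasurableSpace Ω] {μ : Measure Ω}
    [IsProbabilityMeasure μ] {X : Ω → ℝ} (hX : AEStronglyMeasurable X μ) (a : ℝ) :
    Var[fun ω => 1 - a * (1 - X ω); μ] = a ^ 2 * Var[X; μ] := by
  have haffine : (fun ω => 1 - a * (1 - X ω)) = fun ω => (1 - a) + a * X ω := by
    ext; ring
  rw [haffine, variance_const_add (hX.const_mul a), variance_const_mul]

lemma exp_neg_mul_mul_sinh_mul_div_nonneg {k t : ℝ} (hk : 0 ≤ k) (ht : 0 ≤ t) :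
    0 ≤ Real.exp (-k * t) * Real.sinh (k * t) / k := by
  have := Real.sinh_nonneg_iff.mpr (mul_nonneg hk ht)
  positivity

theorem projection_fidelity_variance_OU_calibrated_general (k γ t : ℝ) (hk : 0 < k)
    (ht : 0 ≤ t)
    (τ : ℝ) (hτ : τ = Real.exp (-k * t) * Real.sinh (k * t) / k)
    (μ : Measure ℝ) (hμ : μ = gaussianReal 0 (Real.toNNReal (γ ^ 2 * τ)))
    (p : ℝ) :
    ∫ x, (1 - 2 * p * (1 - p) * (1 - Real.cos x)) ^ 2 ∂μ
        - (∫ x, (1 - 2 * p * (1 - p) * (1 - Real.cos x)) ∂μ) ^ 2 =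
      2 * p ^ 2 * (1 - p) ^ 2 * (1 - Real.exp (-γ ^ 2 * τ)) ^ 2 := by
  have hv : 0 ≤ γ ^ 2 * τ :=
    mul_nonneg (sq_nonneg γ) (hτ ▸ exp_neg_mul_mul_sinh_mul_div_nonneg hk.le ht)
  subst hμ
  calc _ = Var[fun x => 1 - 2 * p * (1 - p) * (1 - Real.cos x);
          gaussianReal 0 (γ ^ 2 * τ).toNNReal] :=
        (variance_eq_sub ((memLp_const 1).sub
          (((memLp_const 1).sub (memLp_cos_comp _ measurable_id 2)).const_mul _))).symm
    _ = (2 * p * (1 - p)) ^ 2 * Var[Real.cos; gaussianReal 0 (γ ^ 2 * τ).toNNReal] :=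
        variance_one_sub_mul_one_sub (by fun_prop) _
    _ = _ := by
        rw [variance_cos_gaussianReal, Real.coe_toNNReal _ hv, neg_mul]
        ring

theorem projection_fidelity_variance_OU_calibrated (k γ t : ℝ) (hk : 0 < k) (hγ : 0 < γ)
    (ht : 0 ≤ t)
    (τ : ℝ) (hτ : τ = Real.exp (-k * t) * Real.sinh (k * t) / k)
    (μ : Measure ℝ) (hμ : μ = gaussianReal 0 (Real.toNNReal (γ ^ 2 * τ)))
    (p : ℝ) :
    ∫ x, (1 - 2 * p * (1 - p) * (1 - Real.cos x)) ^ 2 ∂μ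
        - (∫ x, (1 - 2 * p * (1 - p) * (1 - Real.cos x)) ∂μ) ^ 2 =
      2 * p ^ 2 * (1 - p) ^ 2 * (1 - Real.exp (-γ ^ 2 * τ)) ^ 2 :=
  projection_fidelity_variance_OU_calibrated_general k γ t hk ht τ hτ μ hμ p
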